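/- Let M be a matroid on the finite ground set [n] = {1, …, n}, let p ≥ 2 be an integer, and let 𝐢 = (i_1, …, i_p) be a p-tuple of positive integers with i_1 + ⋯ + i_p = n. Then π_{𝐢}(M) equals the coefficient of x_1^{n−i_1} x_2^{n−i_2} ⋯ x_p^{n−i_p} in H(G_M(𝐱_1) G_M(𝐱_2) ⋯ G_M(𝐱_p)), where 𝐱_j = (x_j, x_{j,1}, …, x_{j,n}) are p pairwise disjoint sets of variables, G_M(𝐱_j) = Σ_{I ∈ 𝓘} x_j^{n−|I|} Π_{i ∈ I} x_{j,i}, H = H_1 H_2 ⋯ H_n, and H_i(f) = Σ_{j=1}^{p} (∂f/∂x_{j,i})|_{x_{1,i} = x_{2,i} = ⋯ = x_{p,i} = 0}. Moreover, if 𝐣 = (j_1, …, j_p) is any permutation of 𝐢, then π_{𝐢}(M) = π_{𝐣}(M). -/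

import Mathlib

open scoped Classical

/-- `piTuple N i` is the number of ordered partitions `(A_1, …, A_p)` of the ground set
of `N` into pairwise disjoint sets, each independent with `|A_s| = i s`. -/
noncomputable def piTuple {β : Type*} (N : Matroid β) {p : ℕ} (i : Fin p → ℕ) : ℕ :=
  {A : Fin p → Set β | (⋃ s, A s) = N.E ∧ Pairwise (Function.onFun Disjoint A) ∧
    ∀ s, N.Indep (A s) ∧ (A s).ncard = i s}.ncard

/-- The variables `𝐱_1, …, 𝐱_p` where `𝐱_j = (x_j, x_{j,1}, …, x_{j,n})`:
the pair `(j, none)` is the homogenizing variable `x_j` of the `j`-th copy, and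
`(j, some i)` is the variable `x_{j,i}`. -/
abbrev PVar (p n : ℕ) := Fin p × Option (Fin n)

/-- The polynomial `G_M(𝐱_j) = Σ_{I ∈ 𝓘} x_j^{n-|I|} Π_{i ∈ I} x_{j,i}`. -/
noncomputable def GMp {n : ℕ} (M : Matroid (Fin n)) (p : ℕ) (j : Fin p) :
    MvPolynomial (PVar p n) ℝ :=
  ∑ I ∈ Finset.univ.filter (fun I : Finset (Fin n) => M.Indep ↑I),
    MvPolynomial.X (j, (none : Option (Fin n))) ^ (n - I.card) *
      ∏ i ∈ I, MvPolynomial.X (j, (some i : Option (Fin n)))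

/-- The operator `H_i : f ↦ Σ_{j=1}^p (∂f/∂x_{j,i})|_{x_{1,i} = ⋯ = x_{p,i} = 0}`. -/
noncomputable def Hop {p n : ℕ} (i : Fin n) (f : MvPolynomial (PVar p n) ℝ) :
    MvPolynomial (PVar p n) ℝ :=
  MvPolynomial.aeval
    (fun v : PVar p n => if v.2 = some i then 0 else MvPolynomial.X v)
    (∑ j : Fin p, MvPolynomial.pderiv ((j, some i) : PVar p n) f)

/-- The composite operator `H = H_1 H_2 ⋯ H_n`. -/
noncomputable def Hfull (p n : ℕ) :
    MvPolynomial (PVar p n) ℝ → MvPolynomial (PVar p n) ℝ :=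
  (List.finRange n).foldr (fun i g => Hop i ∘ g) id

/-!
Expanding the product, `∏ⱼ G_M(𝐱ⱼ)` is the sum, over tuples `(T₁, …, T_p)` of independent
sets, of the squarefree monomials `∏ⱼ xⱼ^(n - |Tⱼ|) ∏_{a ∈ Tⱼ} x_{j,a}`. On such a monomial
`H_a` vanishes unless `a` lies in exactly one `Tⱼ`, and then it only deletes the factor
`x_{j,a}`. So `H` keeps exactly the tuples that partition `[n]`, each contributing
`∏ⱼ xⱼ^(n - |Tⱼ|)`, and the coefficient of `∏ⱼ xⱼ^(n - iⱼ)` counts those with `|Tⱼ| = iⱼ`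
(using `iⱼ ≤ n` to cancel the truncated subtractions). Permuting `𝐢` permutes the blocks.
-/

open MvPolynomial

theorem iUnion_eq_univ_and_pairwise_disjoint_iff {α ι : Type*} (A : ι → Set α) :
    (⋃ s, A s) = Set.univ ∧ Pairwise (Function.onFun Disjoint A) ↔ ∀ a, ∃! s, a ∈ A s := by
  refine ⟨fun ⟨hU, hD⟩ a => ?_, fun h => ⟨?_, fun s t hst => ?_⟩⟩
  · obtain ⟨s, hs⟩ := Set.mem_iUnion.mp (hU ▸ Set.mem_univ a)
    exact ⟨s, hs, fun t ht => by_contra fun hts => Set.disjoint_left.mp (hD hts) ht hs⟩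
  · exact Set.eq_univ_of_forall fun a => Set.mem_iUnion.mpr (h a).exists
  · exact Set.disjoint_left.mpr fun a has hat => hst ((h a).unique has hat)

section IndepPartition

variable {α : Type*} {p : ℕ}

def IsIndepPartition (N : Matroid α) (i : Fin p → ℕ) (A : Fin p → Set α) : Prop :=
  (⋃ s, A s) = N.E ∧ Pairwise (Function.onFun Disjoint A) ∧
    ∀ s, N.Indep (A s) ∧ (A s).ncard = i s

theorem piTuple_eq_ncard (N : Matroid α) (i : Fin p → ℕ) :
    piTuple N i = {A | IsIndepPartition N i A}.ncard := rfl

theorem isIndepPartition_comp_perm (N : Matroid α) (i : Fin p → ℕ) (A : Fin p → Set α)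
    (σ : Equiv.Perm (Fin p)) :
    IsIndepPartition N (i ∘ σ) (A ∘ σ) ↔ IsIndepPartition N i A := by
  refine and_congr ?_ (and_congr (EquivLike.pairwise_comp_iff σ (Function.onFun Disjoint A))
    (σ.forall_congr_right (q := fun s => N.Indep (A s) ∧ (A s).ncard = i s)))
  rw [← σ.surjective.iUnion_comp A]
  rfl

theorem piTuple_comp_perm (N : Matroid α) (i : Fin p → ℕ) (σ : Equiv.Perm (Fin p)) :
    piTuple N (i ∘ σ) = piTuple N i := by
  have hset : {A | IsIndepPartition N (i ∘ σ) A} =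
      (fun A => A ∘ σ.symm) ⁻¹' {A | IsIndepPartition N i A} := by
    ext A
    simp only [Set.mem_ofPred_eq, Set.mem_preimage, ← isIndepPartition_comp_perm N i _ σ,
      Function.comp_assoc, Equiv.symm_comp_self, Function.comp_id]
  rw [piTuple_eq_ncard, piTuple_eq_ncard, hset]
  have hbij : Function.Bijective (fun A : Fin p → Set α => A ∘ σ.symm) :=
    (σ.arrowCongr (Equiv.refl _)).bijective
  exact Set.ncard_preimage_of_injective_subset_range hbij.injective
    (by simp [hbij.surjective.range_eq])

variable [Fintype α]

noncomputable def indepTuples (M : Matroid α) (p : ℕ) : Finset (Fin p → Finset α) :=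
  Fintype.piFinset fun _ => Finset.univ.filter fun I => M.Indep ↑I

noncomputable def indepPartitionTuples (M : Matroid α) (i : Fin p → ℕ) :
    Finset (Fin p → Finset α) :=
  (indepTuples M p).filter fun T => (∀ a, ∃! j, a ∈ T j) ∧ ∀ j, (T j).card = i j

theorem isIndepPartition_coe_iff {M : Matroid α} (hE : M.E = Set.univ)
    (i : Fin p → ℕ) (T : Fin p → Finset α) :
    IsIndepPartition M i (fun j => ↑(T j)) ↔
      T ∈ indepTuples M p ∧ (∀ a, ∃! j, a ∈ T j) ∧ ∀ j, (T j).card = i j := by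
  simp only [IsIndepPartition, hE, iUnion_eq_univ_and_pairwise_disjoint_iff, ← and_assoc,
    Finset.mem_coe, Set.ncard_coe_finset, forall_and, indepTuples, Fintype.mem_piFinset,
    Finset.mem_filter, Finset.mem_univ, true_and]
  tauto

theorem ncard_setOf_isIndepPartition {M : Matroid α} (hE : M.E = Set.univ) (i : Fin p → ℕ) :
    {A | IsIndepPartition M i A}.ncard = (indepPartitionTuples M i).card := by
  let e : (Fin p → Finset α) ≃ (Fin p → Set α) :=
    Equiv.piCongrRight fun _ => Fintype.finsetEquivSet
  have hpre : e ⁻¹' {A | IsIndepPartition M i A} = ↑(indepPartitionTuples M i) := by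
    ext T
    rw [Set.mem_preimage, Finset.mem_coe, indepPartitionTuples, Finset.mem_filter]
    exact isIndepPartition_coe_iff hE i T
  rw [← Set.ncard_coe_finset, ← hpre, Set.ncard_preimage_of_injective_subset_range e.injective
    (by simp [e.surjective.range_eq])]

end IndepPartition

section Expansion

variable {p n : ℕ}

noncomputable def tupleDegree (e : Fin p → ℕ) (P : Fin p → Finset (Fin n)) : PVar p n →₀ ℕ :=
  Finsupp.equivFunOnFinite.symm fun
    | (j, none) => e j
    | (j, some a) => if a ∈ P j then 1 else 0

@[simp]
theorem tupleDegree_none (e : Fin p → ℕ) (P : Fin p → Finset (Fin n)) (j : Fin p) :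
    tupleDegree e P (j, none) = e j := rfl

@[simp]
theorem tupleDegree_some (e : Fin p → ℕ) (P : Fin p → Finset (Fin n)) (j : Fin p) (a : Fin n) :
    tupleDegree e P (j, some a) = if a ∈ P j then 1 else 0 := rfl

theorem tupleDegree_empty (e : Fin p → ℕ) :
    tupleDegree e (fun _ => (∅ : Finset (Fin n))) =
      ∑ j, Finsupp.single ((j, none) : PVar p n) (e j) := by
  ext ⟨j, _ | a⟩ <;> simp [Finsupp.single_apply]

theorem monomial_tupleDegree {R : Type*} [CommSemiring R] (e : Fin p → ℕ)
    (P : Fin p → Finset (Fin n)) :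
    monomial (tupleDegree e P) (1 : R) =
      ∏ j, (X (j, none) ^ e j * ∏ a ∈ P j, X (j, some a)) := by
  rw [monomial_eq, C_1, one_mul, Finsupp.prod_pow, Fintype.prod_prod_type]
  refine Finset.prod_congr rfl fun j _ => ?_
  simp [Fintype.prod_option, pow_ite, Finset.prod_ite_mem]

theorem aeval_eraseColumn_monomial {R : Type*} [CommSemiring R] (a : Fin n)
    (d : PVar p n →₀ ℕ) (c : R) :
    aeval (fun v : PVar p n => if v.2 = some a then 0 else X v) (monomial d c) =
      if ∀ j, d (j, some a) = 0 then monomial d c else 0 := by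
  rw [aeval_monomial, Finsupp.prod_pow]
  split_ifs with hcol
  · rw [monomial_eq, Finsupp.prod_pow, algebraMap_eq]
    congr 1
    refine Finset.prod_congr rfl fun v _ => ?_
    rcases v with ⟨j, _ | b⟩
    · simp
    · by_cases hb : b = a
      · simp [hb, hcol]
      · simp [hb]
  · obtain ⟨j, hj⟩ := not_forall.mp hcol
    rw [Finset.prod_eq_zero (Finset.mem_univ (j, some a)) (by simp [zero_pow hj]), mul_zero]

theorem Hop_monomial_tupleDegree (a : Fin n) (e : Fin p → ℕ) (P : Fin p → Finset (Fin n)) :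
    Hop a (monomial (tupleDegree e P) (1 : ℝ)) =
      if ∃! j, a ∈ P j then monomial (tupleDegree e fun j => (P j).erase a) 1 else 0 := by
  simp only [Hop, map_sum, pderiv_monomial, tupleDegree_some, aeval_eraseColumn_monomial]
  split_ifs with huniq
  · obtain ⟨j₀, hj₀, hothers⟩ := huniq
    have herase : tupleDegree e P - Finsupp.single (j₀, some a) 1 =
        tupleDegree e fun j => (P j).erase a := by
      ext ⟨j, _ | b⟩
      · simp
      · simp only [Finsupp.tsub_apply, tupleDegree_some, Finsupp.single_apply, Prod.mk.injEq,
          Option.some.injEq, Finset.mem_erase]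
        split_ifs <;> grind
    rw [Finset.sum_eq_single j₀]
    · simp [hj₀, herase]
    · intro j _ hj
      have : a ∉ P j := fun h => hj (hothers j h)
      simp [this]
    · simp
  · refine Finset.sum_eq_zero fun j _ => ?_
    by_cases ha : a ∈ P j
    · obtain ⟨j', hj', hne⟩ : ∃ j', a ∈ P j' ∧ j' ≠ j := by
        by_contra! hnone
        exact huniq ⟨j, ha, fun j' hj' => hnone j' hj'⟩
      rw [if_neg fun hcol => by simpa [hj', hne.symm] using hcol j']
    · simp [ha]

theorem Hop_sum (a : Fin n) {ι : Type*} (s : Finset ι) (f : ι → MvPolynomial (PVar p n) ℝ) :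
    Hop a (∑ x ∈ s, f x) = ∑ x ∈ s, Hop a (f x) := by
  simp only [Hop, map_sum]
  exact Finset.sum_comm

noncomputable def HopList (L : List (Fin n)) :
    MvPolynomial (PVar p n) ℝ → MvPolynomial (PVar p n) ℝ :=
  L.foldr (fun i g => Hop i ∘ g) id

theorem HopList_sum (L : List (Fin n)) {ι : Type*} (s : Finset ι)
    (f : ι → MvPolynomial (PVar p n) ℝ) :
    HopList L (∑ x ∈ s, f x) = ∑ x ∈ s, HopList L (f x) := by
  induction L with
  | nil => rfl
  | cons a L ih => exact (congrArg (Hop a) ih).trans (Hop_sum a s _)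

theorem HopList_monomial_tupleDegree (e : Fin p → ℕ) (P : Fin p → Finset (Fin n))
    {L : List (Fin n)} (hL : L.Nodup) :
    HopList L (monomial (tupleDegree e P) (1 : ℝ)) =
      if ∀ a ∈ L, ∃! j, a ∈ P j then monomial (tupleDegree e fun j => P j \ L.toFinset) 1
      else 0 := by
  induction L with
  | nil => simp [HopList]
  | cons a L ih =>
    obtain ⟨haL, hL⟩ := List.nodup_cons.mp hL
    change Hop a (HopList L _) = _
    rw [ih hL]
    simp only [List.forall_mem_cons]
    by_cases hrest : ∀ b ∈ L, ∃! j, b ∈ P j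
    · have hmem : ∀ j, a ∈ P j \ L.toFinset ↔ a ∈ P j := by simp [haL]
      simp only [if_pos hrest, and_iff_left hrest, Hop_monomial_tupleDegree, hmem,
        List.toFinset_cons, Finset.sdiff_insert]
    · simp [hrest, Hop]

theorem Hfull_eq_HopList : Hfull p n = HopList (List.finRange n) := rfl

theorem Hfull_monomial_tupleDegree (e : Fin p → ℕ) (P : Fin p → Finset (Fin n)) :
    Hfull p n (monomial (tupleDegree e P) (1 : ℝ)) =
      if ∀ a, ∃! j, a ∈ P j then monomial (∑ j, Finsupp.single ((j, none) : PVar p n) (e j)) 1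
      else 0 := by
  rw [Hfull_eq_HopList, HopList_monomial_tupleDegree e P (List.nodup_finRange n)]
  have hempty : (fun j => P j \ (List.finRange n).toFinset) = fun _ => ∅ := by
    rw [List.toFinset_finRange]
    exact funext fun j => Finset.sdiff_eq_empty_iff_subset.mpr (Finset.subset_univ _)
  simp only [List.mem_finRange, forall_const, hempty, tupleDegree_empty]

theorem prod_GMp (M : Matroid (Fin n)) (p : ℕ) :
    ∏ j, GMp M p j =
      ∑ T ∈ indepTuples M p, monomial (tupleDegree (fun j => n - (T j).card) T) (1 : ℝ) := by
  simp only [GMp, Finset.prod_univ_sum, monomial_tupleDegree]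
  rfl

theorem sum_single_none_inj {e f : Fin p → ℕ} :
    ∑ j, Finsupp.single ((j, none) : PVar p n) (e j) =
      ∑ j, Finsupp.single ((j, none) : PVar p n) (f j) ↔ e = f := by
  refine ⟨fun h => funext fun j => ?_, fun h => h ▸ rfl⟩
  simpa [← tupleDegree_empty] using DFunLike.congr_fun h (j, none)

theorem coeff_Hfull_prod_GMp (M : Matroid (Fin n)) {i : Fin p → ℕ} (hle : ∀ j, i j ≤ n) :
    coeff (∑ j, Finsupp.single ((j, none) : PVar p n) (n - i j)) (Hfull p n (∏ j, GMp M p j)) =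
      (indepPartitionTuples M i).card := by
  rw [prod_GMp, Hfull_eq_HopList, HopList_sum, ← Hfull_eq_HopList, coeff_sum,
    indepPartitionTuples, Finset.card_filter, Nat.cast_sum]
  refine Finset.sum_congr rfl fun T _ => ?_
  have hcard : (fun j => n - (T j).card) = (fun j => n - i j) ↔ ∀ j, (T j).card = i j := by
    refine funext_iff.trans (forall_congr' fun j => ?_)
    have : (T j).card ≤ n := (Finset.card_le_univ _).trans_eq (Fintype.card_fin n)
    have := hle j
    omega
  by_cases hpart : ∀ a, ∃! j, a ∈ T j
  · rw [Hfull_monomial_tupleDegree, if_pos hpart, coeff_monomial]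
    simp only [sum_single_none_inj, hcard, and_iff_right hpart, Nat.cast_ite, Nat.cast_one,
      Nat.cast_zero]
  · simp [Hfull_monomial_tupleDegree, hpart]

end Expansion

theorem piTuple_eq_coeff_H_general {n : ℕ} (M : Matroid (Fin n)) (hE : M.E = Set.univ)
    (p : ℕ) (i : Fin p → ℕ) (hsum : ∑ s, i s = n) :
    (piTuple M i : ℝ) =
      MvPolynomial.coeff
        (∑ j : Fin p, Finsupp.single ((j, none) : PVar p n) (n - i j))
        (Hfull p n (∏ j : Fin p, GMp M p j)) ∧
    ∀ σ : Equiv.Perm (Fin p), piTuple M (i ∘ σ) = piTuple M i := by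
  have hle : ∀ j, i j ≤ n := fun j =>
    hsum ▸ Finset.single_le_sum (fun _ _ => Nat.zero_le _) (Finset.mem_univ j)
  refine ⟨?_, piTuple_comp_perm M i⟩
  rw [coeff_Hfull_prod_GMp M hle, piTuple_eq_ncard, ncard_setOf_isIndepPartition hE]

/-- For a matroid `M` on `{1, …, n}`, `p ≥ 2`, and a tuple `(i_1, …, i_p)` of positive
integers with `i_1 + ⋯ + i_p = n`, the number `π_𝐢(M)` equals the coefficient of
`x_1^{n-i_1} ⋯ x_p^{n-i_p}` in `H(G_M(𝐱_1) ⋯ G_M(𝐱_p))`; moreover `π_𝐢(M) = π_𝐣(M)`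
for any permutation `𝐣` of `𝐢`. -/
theorem piTuple_eq_coeff_H {n : ℕ} (M : Matroid (Fin n)) (hE : M.E = Set.univ)
    (p : ℕ) (hp : 2 ≤ p) (i : Fin p → ℕ) (hpos : ∀ s, 0 < i s) (hsum : ∑ s, i s = n) :
    (piTuple M i : ℝ) =
      MvPolynomial.coeff
        (∑ j : Fin p, Finsupp.single ((j, none) : PVar p n) (n - i j))
        (Hfull p n (∏ j : Fin p, GMp M p j)) ∧
    ∀ σ : Equiv.Perm (Fin p), piTuple M (i ∘ σ) = piTuple M i :=
  piTuple_eq_coeff_H_general M hE p i hsum
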